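/- Let p be a prime and m ≥ 0, n ≥ 1 integers with n ≥ 3m. Let σ_m = (diag(p^{3m}, p^{2m}, p^{m}, 1), diag(p^{2m}, p^{m})) ∈ G(ℚ_p). Then σ_m · B_{m,n} · σ_m⁻¹ ⊆ G(ℤ_p). -/

import Mathlib

open Pointwise

noncomputable section

/-- The ambient ring containing `G(ℚ_ℓ) = (GSp₄ ×_{GL₁} GL₂)(ℚ_ℓ)`:
pairs of a 4×4 and a 2×2 matrix over `ℚ_ℓ`. -/
abbrev MG (p : ℕ) [Fact p.Prime] :=
  Matrix (Fin 4) (Fin 4) ℚ_[p] × Matrix (Fin 2) (Fin 2) ℚ_[p]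

/-- The standard skew-symmetric matrix `J` defining `GSp₄`. -/
def Jmat (p : ℕ) [Fact p.Prime] : Matrix (Fin 4) (Fin 4) ℚ_[p] :=
  !![0, 0, 0, 1; 0, 0, 1, 0; 0, -1, 0, 0; -1, 0, 0, 0]

/-- `G(ℤ_ℓ)`: pairs `(g, h)` with `g ∈ GSp₄(ℤ_ℓ)`, `h ∈ GL₂(ℤ_ℓ)` and
`μ(g) = det h`. -/
def GZ (p : ℕ) [Fact p.Prime] : Set (MG p) :=
  {x | (∀ i j, ‖x.1 i j‖ ≤ 1) ∧ (∀ i j, ‖x.2 i j‖ ≤ 1) ∧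
    ‖x.1.det‖ = 1 ∧ ‖x.2.det‖ = 1 ∧
    x.1.transpose * Jmat p * x.1 = x.2.det • Jmat p}

/-- The subgroup `B_{m,n}` of `G(ℤ_ℓ)`: pairs `(g, h)` with `μ(g) ≡ 1 (mod ℓ^m)`, the
entries of `g` below the diagonal divisible by `ℓⁿ`, the (4,4)-entry of `g` `≡ 1 (mod ℓⁿ)`,
and the (2,1)-entry of `h` divisible by `ℓⁿ`. -/
def Bmn (p : ℕ) [Fact p.Prime] (m n : ℕ) : Set (MG p) :=
  {x ∈ GZ p | ‖x.2.det - 1‖ ≤ (p : ℝ) ^ (-(m : ℤ)) ∧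
    ‖x.1 1 0‖ ≤ (p : ℝ) ^ (-(n : ℤ)) ∧ ‖x.1 2 0‖ ≤ (p : ℝ) ^ (-(n : ℤ)) ∧
    ‖x.1 2 1‖ ≤ (p : ℝ) ^ (-(n : ℤ)) ∧ ‖x.1 3 0‖ ≤ (p : ℝ) ^ (-(n : ℤ)) ∧
    ‖x.1 3 1‖ ≤ (p : ℝ) ^ (-(n : ℤ)) ∧ ‖x.1 3 2‖ ≤ (p : ℝ) ^ (-(n : ℤ)) ∧
    ‖x.1 3 3 - 1‖ ≤ (p : ℝ) ^ (-(n : ℤ)) ∧ ‖x.2 1 0‖ ≤ (p : ℝ) ^ (-(n : ℤ))}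

/-- The element `σ_m = (diag(p^{3m}, p^{2m}, p^m, 1), diag(p^{2m}, p^m))`. -/
def sigmaElt (p : ℕ) [Fact p.Prime] (m : ℕ) : MG p :=
  (Matrix.diagonal ![(p : ℚ_[p]) ^ (3 * m), (p : ℚ_[p]) ^ (2 * m), (p : ℚ_[p]) ^ m, 1],
    Matrix.diagonal ![(p : ℚ_[p]) ^ (2 * m), (p : ℚ_[p]) ^ m])

/-- The inverse `σ_m⁻¹ = (diag(p^{-3m}, p^{-2m}, p^{-m}, 1), diag(p^{-2m}, p^{-m}))`. -/
def sigmaEltInv (p : ℕ) [Fact p.Prime] (m : ℕ) : MG p :=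
  (Matrix.diagonal ![(p : ℚ_[p]) ^ (-(3 * m : ℤ)), (p : ℚ_[p]) ^ (-(2 * m : ℤ)),
      (p : ℚ_[p]) ^ (-(m : ℤ)), 1],
    Matrix.diagonal ![(p : ℚ_[p]) ^ (-(2 * m : ℤ)), (p : ℚ_[p]) ^ (-(m : ℤ))])

/-! Conjugation by `σ_m = diag(p^{w_i})` multiplies the `(i, j)` entry by `p^{w_i - w_j}`.
The weights decrease, so entries on and above the diagonal stay integral, while the entries
below the diagonal, divisible by `pⁿ`, lose at most a factor `p^{3m}` with `3m ≤ n`. The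
determinants do not change, and since `σ_m` is itself a `J`-similitude, conjugating by it
preserves the similitude condition with the same multiplier. -/

open Matrix

def Matrix.IsSimilitude {n R : Type*} [Fintype n] [CommRing R] (J : Matrix n n R) (μ : R)
    (X : Matrix n n R) : Prop :=
  Xᵀ * J * X = μ • J

theorem Matrix.IsSimilitude.conj {n R : Type*} [Fintype n] [DecidableEq n] [CommRing R]
    {J D D' X : Matrix n n R} {c μ : R} (hD : J.IsSimilitude c D) (hDD' : D * D' = 1)
    (hX : J.IsSimilitude μ X) : J.IsSimilitude μ (D * X * D') := by
  have hJ : c • (D'ᵀ * J * D') = J := by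
    calc c • (D'ᵀ * J * D') = D'ᵀ * (Dᵀ * J * D) * D' := by
          rw [hD, Matrix.mul_smul, Matrix.smul_mul]
      _ = (D * D')ᵀ * J * (D * D') := by simp only [transpose_mul, Matrix.mul_assoc]
      _ = J := by rw [hDD', transpose_one, Matrix.one_mul, Matrix.mul_one]
  calc (D * X * D')ᵀ * J * (D * X * D') = D'ᵀ * (Xᵀ * (Dᵀ * J * D) * X) * D' := by
        simp only [transpose_mul, Matrix.mul_assoc]
    _ = μ • (c • (D'ᵀ * J * D')) := by
        rw [hD, Matrix.mul_smul, Matrix.smul_mul, hX, Matrix.mul_smul, Matrix.smul_mul,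
          Matrix.mul_smul, Matrix.smul_mul, smul_comm]
    _ = μ • J := by rw [hJ]

section Diagonal

variable {ι K : Type*} [Fintype ι] [DecidableEq ι] [Field K]

theorem diagonal_zpow_mul_diagonal_zpow_neg {a : K} (ha : a ≠ 0) (w : ι → ℤ) :
    diagonal (fun i => a ^ w i) * diagonal (fun i => a ^ (-w i)) = 1 := by
  rw [diagonal_mul_diagonal, ← diagonal_one]
  congr 1
  funext i
  rw [_root_.zpow_neg, mul_inv_cancel₀ (zpow_ne_zero _ ha)]

theorem diagonal_zpow_mul_mul_diagonal_zpow_neg_apply (a : K) (w : ι → ℤ) (X : Matrix ι ι K)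
    (i j : ι) :
    (diagonal (fun i => a ^ w i) * X * diagonal (fun i => a ^ (-w i))) i j
      = a ^ (w i) * X i j * a ^ (-w j) := by
  rw [mul_diagonal, diagonal_mul]

end Diagonal

section Padic

variable {p : ℕ} [Fact p.Prime]

theorem Padic.norm_p_zpow_mul_le_one_iff (k : ℤ) (x : ℚ_[p]) :
    ‖(p : ℚ_[p]) ^ k * x‖ ≤ 1 ↔ ‖x‖ ≤ (p : ℝ) ^ k := by
  have hp : (0 : ℝ) < p := by exact_mod_cast (Fact.out : p.Prime).pos
  rw [norm_mul, Padic.norm_p_zpow, _root_.zpow_neg, inv_mul_le_iff₀ (zpow_pos hp k), mul_one]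

theorem norm_diagonal_zpow_conj_apply_le_one {ι : Type*} [Fintype ι] [DecidableEq ι]
    (w : ι → ℤ) (X : Matrix ι ι ℚ_[p]) {i j : ι} (h : ‖X i j‖ ≤ (p : ℝ) ^ (w i - w j)) :
    ‖(diagonal (fun i => (p : ℚ_[p]) ^ w i) * X *
      diagonal (fun i => (p : ℚ_[p]) ^ (-w i))) i j‖ ≤ 1 := by
  have hp : (p : ℚ_[p]) ≠ 0 := by exact_mod_cast (Fact.out : p.Prime).ne_zero
  rw [diagonal_zpow_mul_mul_diagonal_zpow_neg_apply, mul_right_comm, ← zpow_add₀ hp,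
    ← sub_eq_add_neg]
  exact (Padic.norm_p_zpow_mul_le_one_iff _ _).mpr h

theorem norm_apply_le_zpow_sub_of_antitone {ι : Type*} [LinearOrder ι] {w : ι → ℤ} {n : ℕ}
    (hw : Antitone w) (hspread : ∀ i j, w j - w i ≤ n) {X : Matrix ι ι ℚ_[p]}
    (hX : ∀ i j, ‖X i j‖ ≤ 1) (hlow : ∀ i j, j < i → ‖X i j‖ ≤ (p : ℝ) ^ (-n : ℤ)) (i j : ι) :
    ‖X i j‖ ≤ (p : ℝ) ^ (w i - w j) := by
  have hp : (1 : ℝ) ≤ p := by exact_mod_cast (Fact.out : p.Prime).one_lt.le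
  rcases lt_or_ge j i with hji | hij
  · exact (hlow i j hji).trans (zpow_le_zpow_right₀ hp (by linarith [hspread i j]))
  · exact (hX i j).trans (one_le_zpow₀ hp (sub_nonneg.mpr (hw hij)))

end Padic

section Sigma

variable {p : ℕ} [Fact p.Prime] {m n : ℕ}

def gspWeight (m : ℕ) : Fin 4 → ℤ := ![3 * m, 2 * m, m, 0]

def gl2Weight (m : ℕ) : Fin 2 → ℤ := ![2 * m, m]

theorem gspWeight_antitone (m : ℕ) : Antitone (gspWeight m) := by
  intro i j hij
  fin_cases i <;> fin_cases j <;> simp [gspWeight] at hij ⊢ <;> omega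

theorem gl2Weight_antitone (m : ℕ) : Antitone (gl2Weight m) := by
  intro i j hij
  fin_cases i <;> fin_cases j <;> simp [gl2Weight] at hij ⊢
  omega

theorem gspWeight_sub_le (h : 3 * m ≤ n) (i j : Fin 4) : gspWeight m j - gspWeight m i ≤ n := by
  fin_cases i <;> fin_cases j <;> simp [gspWeight] <;> omega

theorem gl2Weight_sub_le (h : m ≤ n) (i j : Fin 2) : gl2Weight m j - gl2Weight m i ≤ n := by
  fin_cases i <;> fin_cases j <;> simp [gl2Weight] <;> omega

theorem sigmaElt_eq :
    sigmaElt p m = (diagonal fun i => (p : ℚ_[p]) ^ gspWeight m i,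
      diagonal fun i => (p : ℚ_[p]) ^ gl2Weight m i) := by
  ext i j <;> fin_cases i <;> fin_cases j <;> simp [sigmaElt, gspWeight, gl2Weight] <;> norm_cast

theorem sigmaEltInv_eq :
    sigmaEltInv p m = (diagonal fun i => (p : ℚ_[p]) ^ (-gspWeight m i),
      diagonal fun i => (p : ℚ_[p]) ^ (-gl2Weight m i)) := by
  ext i j <;> fin_cases i <;> fin_cases j <;> simp [sigmaEltInv, gspWeight, gl2Weight]

theorem isSimilitude_diagonal_gspWeight :
    (Jmat p).IsSimilitude ((p : ℚ_[p]) ^ (3 * m : ℤ))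
      (diagonal fun i => (p : ℚ_[p]) ^ gspWeight m i) := by
  have hp : (p : ℚ_[p]) ≠ 0 := by exact_mod_cast (Fact.out : p.Prime).ne_zero
  ext i j
  fin_cases i <;> fin_cases j <;> simp [Jmat, gspWeight] <;>
    rw [← zpow_natCast, ← zpow_add₀ hp] <;> ring_nf

theorem norm_fst_apply_le_of_mem_Bmn {x : MG p} (hx : x ∈ Bmn p m n) (i j : Fin 4)
    (hji : j < i) : ‖x.1 i j‖ ≤ (p : ℝ) ^ (-n : ℤ) := by
  obtain ⟨-, -, h10, h20, h21, h30, h31, h32, -, -⟩ := hx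
  fin_cases i <;> fin_cases j <;> first | assumption | simp at hji

theorem norm_snd_apply_le_of_mem_Bmn {x : MG p} (hx : x ∈ Bmn p m n) (i j : Fin 2)
    (hji : j < i) : ‖x.2 i j‖ ≤ (p : ℝ) ^ (-n : ℤ) := by
  obtain ⟨-, -, -, -, -, -, -, -, -, h10⟩ := hx
  fin_cases i <;> fin_cases j <;> first | assumption | simp at hji

end Sigma

theorem stmt16_general (p : ℕ) [Fact p.Prime] (m n : ℕ) (hnm : 3 * m ≤ n) :
    ({sigmaElt p m} : Set (MG p)) * Bmn p m n * {sigmaEltInv p m} ⊆ GZ p := by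
  rw [Set.singleton_mul, Set.mul_singleton, Set.image_image, sigmaElt_eq, sigmaEltInv_eq]
  rintro _ ⟨x, hx, rfl⟩
  have hlow₁ := norm_fst_apply_le_of_mem_Bmn hx
  have hlow₂ := norm_snd_apply_le_of_mem_Bmn hx
  obtain ⟨⟨hx₁, hx₂, hdet₁, hdet₂, hsim⟩, -⟩ := hx
  have hp : (p : ℚ_[p]) ≠ 0 := by exact_mod_cast (Fact.out : p.Prime).ne_zero
  have hinv₁ := diagonal_zpow_mul_diagonal_zpow_neg hp (gspWeight m)
  have hinv₂ := diagonal_zpow_mul_diagonal_zpow_neg hp (gl2Weight m)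
  have hdet_conj₂ := det_conj_of_mul_eq_one hinv₂ (mul_eq_one_comm.mp hinv₂) (N := x.2)
  refine ⟨fun i j => ?_, fun i j => ?_, ?_, ?_, ?_⟩
  · exact norm_diagonal_zpow_conj_apply_le_one _ _ <| norm_apply_le_zpow_sub_of_antitone
      (gspWeight_antitone m) (gspWeight_sub_le hnm) hx₁ hlow₁ i j
  · exact norm_diagonal_zpow_conj_apply_le_one _ _ <| norm_apply_le_zpow_sub_of_antitone
      (gl2Weight_antitone m) (gl2Weight_sub_le (by omega)) hx₂ hlow₂ i j
  · rwa [Prod.fst_mul, Prod.fst_mul, det_conj_of_mul_eq_one hinv₁ (mul_eq_one_comm.mp hinv₁)]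
  · rwa [Prod.snd_mul, Prod.snd_mul, hdet_conj₂]
  · show (Jmat p).IsSimilitude _ _
    rw [Prod.snd_mul, Prod.snd_mul, hdet_conj₂]
    exact isSimilitude_diagonal_gspWeight.conj hinv₁ hsim

/-- For `n ≥ 3m`, the conjugate `σ_m · B_{m,n} · σ_m⁻¹` is contained in `G(ℤ_p)`. -/
theorem stmt16 (p : ℕ) [Fact p.Prime] (m n : ℕ) (hn : 1 ≤ n) (hnm : 3 * m ≤ n) :
    ({sigmaElt p m} : Set (MG p)) * Bmn p m n * {sigmaEltInv p m} ⊆ GZ p :=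
  stmt16_general p m n hnm
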